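/- For m ≥ 1, let Φ_m : V_m → ℝ be the unique function such that Φ_m(x_j) = 0 for every bottom-row point x_j (j = 0,…,2^m), Φ_m(q₀) = 1, and for every z ∈ V_m not in the bottom row and different from q₀, Φ_m(z) equals the average of the values of Φ_m over the ∼_m-neighbors of z. Then the level-m graph normal derivative at q₀, namely b_m := (5/3)^m (2·Φ_m(q₀) − Σ_{y ∼_m q₀} Φ_m(y)), equals 14·10^m/(3^m + 6·10^m), and c_m := Φ_m((q₀+q₁)/2) = Φ_m((q₀+q₂)/2) = (5·3^m + 9·10^m)/(5·3^m + 30·10^m). -/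

import Mathlib

/-!
Write points of the triangle in barycentric coordinates. The map `F_d` sends the triangle into the
part where the `d`-th coordinate is at least `1/2`, so level-`(k+1)` cells `F_a(·)` and `F_d(·)`
with `a ≠ d` meet only in the junction point `F_a q_d = F_d q_a`. Hence the neighbours of a vertex
of `V_{k+1}` are the images of neighbours in `V_k` under the cell maps containing it, and
harmonicity at a junction point says that the normal derivatives there of the two cells meeting
at it add up to zero.

By induction on the level, a function harmonic away from the three corners has the
level-independent normal derivatives `2u(q_a) - u(q_b) - u(q_c)`. For the Dirichlet problem with
zero bottom row, the top cell `F_0` is harmonic away from its corners and the two bottom cells are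
again such Dirichlet problems one level down. If `ρ_k` is the normal derivative at `q_0` when
`u(q_0) = 1`, the matching conditions at `F_0 q_1`, `F_0 q_2` give
`u(F_0 q_1) = u(F_0 q_2) = 1/(1 + ρ_k)` and then `ρ_{k+1} = (10/3) ρ_k/(1 + ρ_k)`, `ρ_0 = 2`,
whose solution is `ρ_k = 14·10^k/(3^k + 6·10^k)`.
-/

open scoped BigOperators

noncomputable section

namespace SGPaper

/-- The three corners of the Sierpinski gasket:
`q₀ = (1/2, √3/2)`, `q₁ = (0,0)`, `q₂ = (1,0)`. -/
def q : Fin 3 → ℝ × ℝ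
  | 0 => (1 / 2, Real.sqrt 3 / 2)
  | 1 => (0, 0)
  | 2 => (1, 0)

/-- The contraction map towards corner `i`: `F_i(x) = (x + q_i)/2`. -/
def Fmap (i : Fin 3) (x : ℝ × ℝ) : ℝ × ℝ := (2⁻¹ : ℝ) • (x + q i)

/-- `Fword w = F_{w₁} ∘ ⋯ ∘ F_{w_m}` for the word `w = w₁⋯w_m`. -/
def Fword (w : List (Fin 3)) : ℝ × ℝ → ℝ × ℝ :=
  w.foldr (fun i f => Fmap i ∘ f) id

/-- The level-`m` vertex set of the Sierpinski gasket:
`V_m = ⋃_{|w| = m} F_w({q₀, q₁, q₂})`. -/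
def V (m : ℕ) : Set (ℝ × ℝ) :=
  {x | ∃ w : List (Fin 3), w.length = m ∧ ∃ i : Fin 3, x = Fword w (q i)}

/-- `x` and `y` are `m`-neighbors: they are distinct and belong to a common
level-`m` cell `F_w({q₀, q₁, q₂})`. -/
def Nbr (m : ℕ) (x y : ℝ × ℝ) : Prop :=
  x ≠ y ∧ ∃ w : List (Fin 3), w.length = m ∧
    (∃ i : Fin 3, x = Fword w (q i)) ∧ (∃ j : Fin 3, y = Fword w (q j))

/-- The value `(u x - u y)²` on the unordered pair `{x, y}`. -/
def edgeVal (u : ℝ × ℝ → ℝ) : Sym2 (ℝ × ℝ) → ℝ :=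
  Sym2.lift ⟨fun x y => (u x - u y) ^ 2, fun _ _ => by ring⟩

/-- The unordered pair `e` is an edge of the level-`m` graph `Γ_m`. -/
def IsEdge (m : ℕ) (e : Sym2 (ℝ × ℝ)) : Prop :=
  ∃ x y : ℝ × ℝ, Nbr m x y ∧ e = s(x, y)

/-- The level-`m` graph energy: `E_m(u) = (5/3)^m Σ (u x − u y)²`, the sum being over
unordered `m`-neighbor pairs `{x, y}` (a finite set, so `tsum` is the honest sum). -/
def Energy (m : ℕ) (u : ℝ × ℝ → ℝ) : ℝ :=
  (5 / 3 : ℝ) ^ m * ∑' e : {e : Sym2 (ℝ × ℝ) // IsEdge m e}, edgeVal u e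

/-- `Q_E(v)`: minimal level-`m` energy among functions `u : V_m → ℝ` agreeing
with `v` on `E` (the minimum is attained, so it equals this infimum). -/
def Q (m : ℕ) (E : Set (ℝ × ℝ)) (v : ℝ × ℝ → ℝ) : ℝ :=
  sInf {r | ∃ u : ℝ × ℝ → ℝ, (∀ x ∈ E, u x = v x) ∧ r = Energy m u}

/-- Indicator function of the point `z`. -/
def ind (z : ℝ × ℝ) : ℝ × ℝ → ℝ := fun t => if t = z then 1 else 0

/-- The conductance `c^E_{x,y} = (Q_E(𝟙_x) + Q_E(𝟙_y) − Q_E(𝟙_x + 𝟙_y))/2`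
between `x, y ∈ E`, computed at level `m`. -/
def cond (m : ℕ) (E : Set (ℝ × ℝ)) (x y : ℝ × ℝ) : ℝ :=
  (Q m E (ind x) + Q m E (ind y) - Q m E (ind x + ind y)) / 2

/-- The `j`-th bottom-row point of `V_n`: `x_j = q₁ + (j/2ⁿ)(q₂ − q₁)`. -/
def xb (n j : ℕ) : ℝ × ℝ := q 1 + ((j : ℝ) / 2 ^ n) • (q 2 - q 1)

/-- The bottom row `Ẽ_n = {x₀, …, x_{2ⁿ}}` of `V_n`. -/
def Ebot (n : ℕ) : Set (ℝ × ℝ) := {p | ∃ j ≤ 2 ^ n, p = xb n j}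

/-- The bottom row together with the top point: `E_n⁺ = {q₀, x₀, …, x_{2ⁿ}}`. -/
def Eplus (n : ℕ) : Set (ℝ × ℝ) := insert (q 0) (Ebot n)

/-- The sum of the values of `u` over the `∼_m`-neighbors of `z`. -/
def nbrSum (m : ℕ) (u : ℝ × ℝ → ℝ) (z : ℝ × ℝ) : ℝ :=
  ∑' y : {y : ℝ × ℝ // Nbr m z y}, u y

def bary : Fin 3 → ℝ × ℝ → ℝ
  | 0, p => 2 * p.2 / √3
  | 1, p => 1 - p.1 - p.2 / √3
  | 2, p => p.1 - p.2 / √3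

lemma bary_q (a b : Fin 3) : bary a (q b) = if a = b then 1 else 0 := by
  have h3 : (√3 : ℝ) ≠ 0 := by positivity
  fin_cases a <;> fin_cases b <;> simp [bary, q] <;> field_simp <;> norm_num

lemma bary_Fmap (a b : Fin 3) (x : ℝ × ℝ) :
    bary a (Fmap b x) = (bary a x + bary a (q b)) / 2 := by
  fin_cases a <;> simp [bary, Fmap] <;> ring

lemma sum_bary (x : ℝ × ℝ) : ∑ a, bary a x = 1 := by
  simp [Fin.sum_univ_three, bary]; ring

lemma eq_of_bary_eq {x y : ℝ × ℝ} (h0 : bary 0 x = bary 0 y) (h2 : bary 2 x = bary 2 y) :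
    x = y := by
  have h3 : (√3 : ℝ) ≠ 0 := by positivity
  simp only [bary] at h0 h2
  have hy : x.2 = y.2 := by field_simp at h0; linarith
  exact Prod.ext (by rw [hy] at h2; linarith) hy

def triangle : Set (ℝ × ℝ) := {x | ∀ a, 0 ≤ bary a x}

lemma bary_le_one {x : ℝ × ℝ} (hx : x ∈ triangle) (a : Fin 3) : bary a x ≤ 1 :=
  sum_bary x ▸ Finset.single_le_sum (fun b _ => hx b) (Finset.mem_univ a)

lemma eq_q_of_bary_eq_one {x : ℝ × ℝ} (hx : x ∈ triangle) {a : Fin 3} (h : bary a x = 1) :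
    x = q a := by
  have hs := sum_bary x
  rw [Fin.sum_univ_three] at hs
  have := hx 0; have := hx 1; have := hx 2
  apply eq_of_bary_eq <;> fin_cases a <;> simp_all [bary_q] <;> linarith

lemma q_injective : Function.Injective q := fun a b h => by
  simpa [bary_q] using congrArg (bary a) h

lemma Fmap_injective (a : Fin 3) : Function.Injective (Fmap a) := fun x y h => by
  simpa [Fmap] using h

lemma Fmap_q_self (a : Fin 3) : Fmap a (q a) = q a := by
  rw [Fmap, ← two_smul ℝ, smul_smul]; norm_num

lemma Fmap_q_comm (a b : Fin 3) : Fmap a (q b) = Fmap b (q a) := by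
  rw [Fmap, Fmap, add_comm]

lemma q_mem_triangle (a : Fin 3) : q a ∈ triangle := fun b => by
  rw [bary_q]; split_ifs <;> norm_num

lemma Fmap_mem_triangle (a : Fin 3) {x : ℝ × ℝ} (hx : x ∈ triangle) : Fmap a x ∈ triangle :=
  fun b => by rw [bary_Fmap]; linarith [hx b, q_mem_triangle a b]

lemma Fmap_eq_Fmap_of_ne {a d : Fin 3} {x z : ℝ × ℝ} (hx : x ∈ triangle) (hz : z ∈ triangle)
    (hda : d ≠ a) (h : Fmap d x = Fmap a z) : x = q a ∧ z = q d := by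
  have hd := congrArg (bary d) h
  have ha := congrArg (bary a) h
  simp only [bary_Fmap, bary_q, if_neg hda, if_neg (Ne.symm hda), if_true] at hd ha
  exact ⟨eq_q_of_bary_eq_one hx (by linarith [bary_le_one hx a, hz a]),
    eq_q_of_bary_eq_one hz (by linarith [bary_le_one hz d, hx d])⟩

lemma Fmap_ne_q {z : ℝ × ℝ} (hz : z ∈ triangle) (hzq : ∀ d, z ≠ q d) (a d : Fin 3) :
    Fmap a z ≠ q d := by
  rw [← Fmap_q_self d]
  intro h
  by_cases had : a = d
  · exact hzq d (Fmap_injective a (had ▸ h))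
  · exact hzq d (Fmap_eq_Fmap_of_ne hz (q_mem_triangle d) had h).1

lemma Fmap_q_ne_q {a b : Fin 3} (hab : a ≠ b) (d : Fin 3) : Fmap a (q b) ≠ q d := by
  rw [← Fmap_q_self d]
  intro h
  by_cases had : a = d
  · exact hab (q_injective (Fmap_injective a (had ▸ h))).symm
  · obtain ⟨hbd, hda⟩ := Fmap_eq_Fmap_of_ne (q_mem_triangle b) (q_mem_triangle d) had h
    exact hab (q_injective (hda.symm.trans hbd.symm))

lemma Fword_mem_triangle (w : List (Fin 3)) (i : Fin 3) : Fword w (q i) ∈ triangle := by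
  induction w with
  | nil => exact q_mem_triangle i
  | cons a w ih => exact Fmap_mem_triangle a ih

lemma V_subset_triangle (m : ℕ) : V m ⊆ triangle := by
  rintro _ ⟨w, -, i, rfl⟩
  exact Fword_mem_triangle w i

lemma V_finite (m : ℕ) : (V m).Finite := by
  have hV : V m = ⋃ w ∈ {w : List (Fin 3) | w.length = m}, Set.range fun i => Fword w (q i) := by
    ext x; simp [V, eq_comm]
  rw [hV]
  exact (List.finite_length_eq _ m).biUnion fun _ _ => Set.finite_range _

lemma q_mem_V (m : ℕ) (a : Fin 3) : q a ∈ V m := by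
  refine ⟨List.replicate m a, List.length_replicate, a, ?_⟩
  induction m with
  | zero => rfl
  | succ m ih => exact (Fmap_q_self a).symm.trans (congrArg (Fmap a) ih)

lemma Fmap_mem_V {m : ℕ} (a : Fin 3) {x : ℝ × ℝ} (hx : x ∈ V m) : Fmap a x ∈ V (m + 1) := by
  obtain ⟨w, rfl, i, rfl⟩ := hx
  exact ⟨a :: w, rfl, i, rfl⟩

lemma Nbr.left_mem_V {m : ℕ} {x y : ℝ × ℝ} (h : Nbr m x y) : x ∈ V m :=
  let ⟨_, w, hw, hx, _⟩ := h; ⟨w, hw, hx⟩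

lemma Nbr.right_mem_V {m : ℕ} {x y : ℝ × ℝ} (h : Nbr m x y) : y ∈ V m :=
  let ⟨_, w, hw, _, hy⟩ := h; ⟨w, hw, hy⟩

lemma Nbr.Fmap {m : ℕ} {x y : ℝ × ℝ} (h : Nbr m x y) (a : Fin 3) :
    Nbr (m + 1) (Fmap a x) (Fmap a y) := by
  obtain ⟨hne, w, rfl, ⟨i, rfl⟩, j, rfl⟩ := h
  exact ⟨(Fmap_injective a).ne hne, a :: w, rfl, ⟨i, rfl⟩, j, rfl⟩

lemma nbr_succ_iff {m : ℕ} {x y : ℝ × ℝ} :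
    Nbr (m + 1) x y ↔ ∃ a x' y', Nbr m x' y' ∧ x = Fmap a x' ∧ y = Fmap a y' := by
  constructor
  · rintro ⟨hne, _ | ⟨a, w⟩, hw, ⟨i, rfl⟩, j, rfl⟩
    · simp at hw
    · exact ⟨a, _, _, ⟨fun h => hne (congrArg (Fmap a) h), w, by simpa using hw, ⟨i, rfl⟩, j, rfl⟩,
        rfl, rfl⟩
  · rintro ⟨a, x', y', h, rfl, rfl⟩
    exact h.Fmap a

lemma nbr_zero_iff {x y : ℝ × ℝ} : Nbr 0 x y ↔ x ≠ y ∧ (∃ i, x = q i) ∧ ∃ j, y = q j := by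
  simp [Nbr, Fword]

def nbrs (m : ℕ) (x : ℝ × ℝ) : Set (ℝ × ℝ) := {y | Nbr m x y}

lemma nbrs_finite (m : ℕ) (x : ℝ × ℝ) : (nbrs m x).Finite :=
  (V_finite m).subset fun _ h => Nbr.right_mem_V h

lemma nbrs_zero_q {a b c : Fin 3} (hab : a ≠ b) (hac : a ≠ c) (hbc : b ≠ c) :
    nbrs 0 (q a) = {q b, q c} := by
  ext y
  simp only [nbrs, Set.mem_ofPred_eq, nbr_zero_iff, Set.mem_insert_iff, Set.mem_singleton_iff]
  constructor
  · rintro ⟨hne, -, j, rfl⟩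
    have hj : j = a ∨ j = b ∨ j = c := by clear hne; revert a b c j; decide
    rcases hj with rfl | rfl | rfl
    exacts [absurd rfl hne, .inl rfl, .inr rfl]
  · rintro (rfl | rfl)
    · exact ⟨q_injective.ne hab, ⟨a, rfl⟩, b, rfl⟩
    · exact ⟨q_injective.ne hac, ⟨a, rfl⟩, c, rfl⟩

lemma nbr_succ_Fmap {m : ℕ} {a : Fin 3} {z y : ℝ × ℝ} (hz : z ∈ triangle)
    (h : Nbr (m + 1) (Fmap a z) y) :
    (∃ y', Nbr m z y' ∧ y = Fmap a y') ∨
      ∃ d ≠ a, z = q d ∧ ∃ y', Nbr m (q a) y' ∧ y = Fmap d y' := by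
  obtain ⟨d, x', y', h', hx, rfl⟩ := nbr_succ_iff.1 h
  by_cases hda : d = a
  · subst hda
    exact .inl ⟨y', Fmap_injective d hx ▸ h', rfl⟩
  · obtain ⟨rfl, rfl⟩ := Fmap_eq_Fmap_of_ne (V_subset_triangle m h'.left_mem_V) hz hda hx.symm
    exact .inr ⟨d, hda, rfl, y', h', rfl⟩

lemma nbrs_succ_Fmap {m : ℕ} (a : Fin 3) {z : ℝ × ℝ} (hz : z ∈ triangle) (hzq : ∀ d, z ≠ q d) :
    nbrs (m + 1) (Fmap a z) = Fmap a '' nbrs m z := by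
  ext y
  refine ⟨fun h => ?_, fun ⟨y', h, hy⟩ => hy ▸ Nbr.Fmap h a⟩
  rcases nbr_succ_Fmap hz h with ⟨y', h', rfl⟩ | ⟨d, -, hzd, -⟩
  · exact ⟨y', h', rfl⟩
  · exact absurd hzd (hzq d)

lemma nbrs_succ_q (m : ℕ) (a : Fin 3) : nbrs (m + 1) (q a) = Fmap a '' nbrs m (q a) := by
  ext y
  refine ⟨fun h => ?_, fun ⟨y', h, hy⟩ => by simpa [nbrs, hy, Fmap_q_self] using Nbr.Fmap h a⟩
  rw [nbrs, Set.mem_ofPred_eq, ← Fmap_q_self a] at h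
  rcases nbr_succ_Fmap (q_mem_triangle a) h with ⟨y', h', rfl⟩ | ⟨d, hda, had, -⟩
  · exact ⟨y', h', rfl⟩
  · exact absurd (q_injective had) hda.symm

lemma nbrs_succ_junction (m : ℕ) (a b : Fin 3) :
    nbrs (m + 1) (Fmap a (q b)) = Fmap a '' nbrs m (q b) ∪ Fmap b '' nbrs m (q a) := by
  ext y
  constructor
  · intro h
    rcases nbr_succ_Fmap (q_mem_triangle b) h with ⟨y', h', rfl⟩ | ⟨d, -, hbd, y', h', rfl⟩
    · exact .inl ⟨y', h', rfl⟩
    · obtain rfl := q_injective hbd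
      exact .inr ⟨y', h', rfl⟩
  · rintro (⟨y', h, rfl⟩ | ⟨y', h, rfl⟩)
    · exact h.Fmap a
    · simpa [nbrs, Fmap_q_comm a b] using h.Fmap b

lemma disjoint_junction_nbrs (m : ℕ) {a b : Fin 3} (hab : a ≠ b) :
    Disjoint (Fmap a '' nbrs m (q b)) (Fmap b '' nbrs m (q a)) := by
  rw [Set.disjoint_left]
  rintro _ ⟨y, hy, rfl⟩ ⟨y', hy', h⟩
  have := (Fmap_eq_Fmap_of_ne (V_subset_triangle m hy'.right_mem_V)
    (V_subset_triangle m hy.right_mem_V) hab.symm h).2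
  exact hy.1 this.symm

lemma nbrSum_eq_tsum (m : ℕ) (u : ℝ × ℝ → ℝ) (z : ℝ × ℝ) :
    nbrSum m u z = ∑' y : nbrs m z, u y := rfl

lemma nbrSum_succ_Fmap {m : ℕ} (u : ℝ × ℝ → ℝ) (a : Fin 3) {z : ℝ × ℝ} (hz : z ∈ triangle)
    (hzq : ∀ d, z ≠ q d) : nbrSum (m + 1) u (Fmap a z) = nbrSum m (u ∘ Fmap a) z := by
  rw [nbrSum_eq_tsum, nbrs_succ_Fmap a hz hzq, tsum_image _ (Fmap_injective a).injOn]
  rfl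

lemma nbrSum_succ_q (m : ℕ) (u : ℝ × ℝ → ℝ) (a : Fin 3) :
    nbrSum (m + 1) u (q a) = nbrSum m (u ∘ Fmap a) (q a) := by
  rw [nbrSum_eq_tsum, nbrs_succ_q, tsum_image _ (Fmap_injective a).injOn]
  rfl

lemma nbrSum_succ_junction (m : ℕ) (u : ℝ × ℝ → ℝ) {a b : Fin 3} (hab : a ≠ b) :
    nbrSum (m + 1) u (Fmap a (q b)) =
      nbrSum m (u ∘ Fmap a) (q b) + nbrSum m (u ∘ Fmap b) (q a) := by
  rw [nbrSum_eq_tsum, nbrs_succ_junction,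
    Summable.tsum_union_disjoint (disjoint_junction_nbrs m hab)
      (((nbrs_finite m _).image _).summable _) (((nbrs_finite m _).image _).summable _),
    tsum_image _ (Fmap_injective a).injOn, tsum_image _ (Fmap_injective b).injOn]
  rfl

lemma nbrSum_zero_q (u : ℝ × ℝ → ℝ) {a b c : Fin 3} (hab : a ≠ b) (hac : a ≠ c) (hbc : b ≠ c) :
    nbrSum 0 u (q a) = u (q b) + u (q c) := by
  rw [nbrSum_eq_tsum, nbrs_zero_q hab hac hbc, ← Finset.coe_pair, Finset.tsum_subtype',
    Finset.sum_pair (q_injective.ne hbc)]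

lemma ncard_nbrs_q (m : ℕ) (a : Fin 3) : (nbrs m (q a)).ncard = 2 := by
  induction m with
  | zero =>
    rw [nbrs_zero_q (b := a + 1) (c := a + 2) (by revert a; decide) (by revert a; decide)
      (by revert a; decide), Set.ncard_pair (q_injective.ne (by revert a; decide))]
  | succ m ih => rw [nbrs_succ_q, Set.ncard_image_of_injective _ (Fmap_injective a), ih]

lemma ncard_nbrs_junction (m : ℕ) {a b : Fin 3} (hab : a ≠ b) :
    (nbrs (m + 1) (Fmap a (q b))).ncard = 4 := by
  rw [nbrs_succ_junction, Set.ncard_union_eq (disjoint_junction_nbrs m hab)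
    ((nbrs_finite m _).image _) ((nbrs_finite m _).image _),
    Set.ncard_image_of_injective _ (Fmap_injective a),
    Set.ncard_image_of_injective _ (Fmap_injective b),
    ncard_nbrs_q, ncard_nbrs_q]

def IsHarmonicAt (m : ℕ) (u : ℝ × ℝ → ℝ) (z : ℝ × ℝ) : Prop :=
  u z = nbrSum m u z / (nbrs m z).ncard

lemma isHarmonicAt_succ_Fmap_iff {m : ℕ} {u : ℝ × ℝ → ℝ} (a : Fin 3) {z : ℝ × ℝ}
    (hz : z ∈ triangle) (hzq : ∀ d, z ≠ q d) :
    IsHarmonicAt (m + 1) u (Fmap a z) ↔ IsHarmonicAt m (u ∘ Fmap a) z := by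
  rw [IsHarmonicAt, IsHarmonicAt, nbrSum_succ_Fmap u a hz hzq, nbrs_succ_Fmap a hz hzq,
    Set.ncard_image_of_injective _ (Fmap_injective a), Function.comp_apply]

def normalDeriv (m : ℕ) (u : ℝ × ℝ → ℝ) (a : Fin 3) : ℝ :=
  (5 / 3 : ℝ) ^ m * (2 * u (q a) - nbrSum m u (q a))

lemma normalDeriv_zero (u : ℝ × ℝ → ℝ) {a b c : Fin 3} (hab : a ≠ b) (hac : a ≠ c) (hbc : b ≠ c) :
    normalDeriv 0 u a = 2 * u (q a) - u (q b) - u (q c) := by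
  rw [normalDeriv, nbrSum_zero_q u hab hac hbc]
  ring

lemma normalDeriv_succ (m : ℕ) (u : ℝ × ℝ → ℝ) (a : Fin 3) :
    normalDeriv (m + 1) u a = 5 / 3 * normalDeriv m (u ∘ Fmap a) a := by
  rw [normalDeriv, normalDeriv, nbrSum_succ_q, Function.comp_apply, Fmap_q_self]
  ring

lemma IsHarmonicAt.normalDeriv_add_normalDeriv {m : ℕ} {u : ℝ × ℝ → ℝ} {a b : Fin 3} (hab : a ≠ b)
    (h : IsHarmonicAt (m + 1) u (Fmap a (q b))) :
    normalDeriv m (u ∘ Fmap a) b + normalDeriv m (u ∘ Fmap b) a = 0 := by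
  rw [IsHarmonicAt, nbrSum_succ_junction m u hab, ncard_nbrs_junction m hab, Nat.cast_ofNat] at h
  simp only [normalDeriv, Function.comp_apply, ← Fmap_q_comm a b]
  linear_combination (4 * (5 / 3 : ℝ) ^ m) * h

def HarmonicOffCorners (m : ℕ) (u : ℝ × ℝ → ℝ) : Prop :=
  ∀ z ∈ V m, (∀ a, z ≠ q a) → IsHarmonicAt m u z

lemma HarmonicOffCorners.comp_Fmap {m : ℕ} {u : ℝ × ℝ → ℝ} (h : HarmonicOffCorners (m + 1) u)
    (a : Fin 3) : HarmonicOffCorners m (u ∘ Fmap a) := fun z hz hzq =>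
  (isHarmonicAt_succ_Fmap_iff a (V_subset_triangle m hz) hzq).1
    (h (Fmap a z) (Fmap_mem_V a hz) (Fmap_ne_q (V_subset_triangle m hz) hzq a))

theorem HarmonicOffCorners.normalDeriv_eq {m : ℕ} {u : ℝ × ℝ → ℝ} (hu : HarmonicOffCorners m u)
    {a b c : Fin 3} (hab : a ≠ b) (hac : a ≠ c) (hbc : b ≠ c) :
    normalDeriv m u a = 2 * u (q a) - u (q b) - u (q c) := by
  induction m generalizing u a b c with
  | zero => exact normalDeriv_zero u hab hac hbc
  | succ k ih =>
    have junction {x y z : Fin 3} (hxy : x ≠ y) (hxz : x ≠ z) (hyz : y ≠ z) :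
        4 * u (Fmap x (q y)) = u (q x) + u (q y) + u (Fmap x (q z)) + u (Fmap y (q z)) := by
      have hmatch := IsHarmonicAt.normalDeriv_add_normalDeriv hxy
        (hu _ (Fmap_mem_V x (q_mem_V k y)) (Fmap_q_ne_q hxy))
      rw [ih (hu.comp_Fmap x) hxy.symm hyz hxz, ih (hu.comp_Fmap y) hxy hxz hyz] at hmatch
      simp only [Function.comp_apply, Fmap_q_self, Fmap_q_comm y x] at hmatch
      linarith
    have hab' := junction hab hac hbc
    have hac' := junction hac hab hbc.symm
    have hbc' := junction hbc hab.symm hac.symm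
    rw [Fmap_q_comm c b] at hac'
    rw [Fmap_q_comm b a, Fmap_q_comm c a] at hbc'
    rw [normalDeriv_succ, ih (hu.comp_Fmap a) hab hac hbc]
    simp only [Function.comp_apply, Fmap_q_self]
    linarith

lemma xb_eq (n j : ℕ) : xb n j = ((j : ℝ) / 2 ^ n, 0) := by
  simp [xb, q]

lemma bary_zero_xb (n j : ℕ) : bary 0 (xb n j) = 0 := by
  simp [bary, xb_eq]

lemma Fmap_one_xb (k j : ℕ) : Fmap 1 (xb k j) = xb (k + 1) j := by
  simp only [xb_eq, Fmap, q]
  ext <;> simp [pow_succ]; ring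

lemma Fmap_two_xb (k j : ℕ) : Fmap 2 (xb k j) = xb (k + 1) (j + 2 ^ k) := by
  simp only [xb_eq, Fmap, q]
  ext <;> simp [pow_succ]; field_simp

def topNormalDeriv (m : ℕ) : ℝ := 14 * 10 ^ m / (3 ^ m + 6 * 10 ^ m)

lemma topNormalDeriv_pos (m : ℕ) : 0 < topNormalDeriv m := by
  unfold topNormalDeriv; positivity

lemma topNormalDeriv_succ (m : ℕ) :
    topNormalDeriv (m + 1) = 10 / 3 * topNormalDeriv m / (1 + topNormalDeriv m) := by
  unfold topNormalDeriv
  field_simp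
  ring

lemma one_div_one_add_topNormalDeriv (m : ℕ) :
    1 / (1 + topNormalDeriv m) =
      (5 * 3 ^ (m + 1) + 9 * 10 ^ (m + 1)) / (5 * 3 ^ (m + 1) + 30 * 10 ^ (m + 1)) := by
  unfold topNormalDeriv
  field_simp
  ring

structure IsBottomDirichlet (m : ℕ) (u : ℝ × ℝ → ℝ) : Prop where
  bottom : ∀ j ≤ 2 ^ m, u (xb m j) = 0
  /-- `bary 0 z ≠ 0` keeps `z` off the bottom edge, which contains the bottom row. -/
  harmonic : ∀ z ∈ V m, bary 0 z ≠ 0 → z ≠ q 0 → IsHarmonicAt m u z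

namespace IsBottomDirichlet

variable {k : ℕ} {u : ℝ × ℝ → ℝ}

lemma comp_Fmap (hu : IsBottomDirichlet (k + 1) u) {b : Fin 3} (hb : b ≠ 0) :
    IsBottomDirichlet k (u ∘ Fmap b) where
  bottom j hj := by
    have hk : 2 ^ (k + 1) = 2 ^ k + 2 ^ k := by ring
    obtain rfl | rfl : b = 1 ∨ b = 2 := by revert b; decide
    · rw [Function.comp_apply, Fmap_one_xb]
      exact hu.bottom j (by omega)
    · rw [Function.comp_apply, Fmap_two_xb]
      exact hu.bottom (j + 2 ^ k) (by omega)
  harmonic z hz h0 hz0 := by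
    have hzq : ∀ d, z ≠ q d := by
      intro d hd
      fin_cases d
      · exact hz0 hd
      all_goals exact h0 (by simp [hd, bary_q])
    refine (isHarmonicAt_succ_Fmap_iff b (V_subset_triangle k hz) hzq).1
      (hu.harmonic _ (Fmap_mem_V b hz) ?_ (Fmap_ne_q (V_subset_triangle k hz) hzq b 0))
    simpa [bary_Fmap, bary_q, hb.symm] using h0

lemma harmonicOffCorners_comp_Fmap_zero (hu : IsBottomDirichlet (k + 1) u) :
    HarmonicOffCorners k (u ∘ Fmap 0) := fun z hz hzq => by
  have hzT := V_subset_triangle k hz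
  refine (isHarmonicAt_succ_Fmap_iff 0 hzT hzq).1
    (hu.harmonic _ (Fmap_mem_V 0 hz) ?_ (Fmap_ne_q hzT hzq 0 0))
  rw [bary_Fmap, bary_q, if_pos rfl]
  linarith [hzT 0]

lemma isHarmonicAt_junction (hu : IsBottomDirichlet (k + 1) u) {b : Fin 3} (hb : b ≠ 0) :
    IsHarmonicAt (k + 1) u (Fmap 0 (q b)) :=
  hu.harmonic _ (Fmap_mem_V 0 (q_mem_V k b)) (by simp [bary_Fmap, bary_q, hb.symm])
    (Fmap_q_ne_q hb.symm 0)

lemma junction_values_of (hu : IsBottomDirichlet (k + 1) u)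
    (h₁ : normalDeriv k (u ∘ Fmap 1) 0 = topNormalDeriv k * u (Fmap 1 (q 0)))
    (h₂ : normalDeriv k (u ∘ Fmap 2) 0 = topNormalDeriv k * u (Fmap 2 (q 0))) :
    u (Fmap 0 (q 1)) = u (q 0) / (1 + topNormalDeriv k) ∧
      u (Fmap 0 (q 2)) = u (q 0) / (1 + topNormalDeriv k) := by
  have hcell := hu.harmonicOffCorners_comp_Fmap_zero
  have e₁ := (hu.isHarmonicAt_junction (b := 1) (by decide)).normalDeriv_add_normalDeriv (by decide)
  have e₂ := (hu.isHarmonicAt_junction (b := 2) (by decide)).normalDeriv_add_normalDeriv (by decide)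
  rw [hcell.normalDeriv_eq (b := 0) (c := 2) (by decide) (by decide) (by decide), h₁] at e₁
  rw [hcell.normalDeriv_eq (b := 0) (c := 1) (by decide) (by decide) (by decide), h₂] at e₂
  simp only [Function.comp_apply, Fmap_q_self, Fmap_q_comm 1 0, Fmap_q_comm 2 0] at e₁ e₂
  have hρ := topNormalDeriv_pos k
  have hsymm : u (Fmap 0 (q 1)) = u (Fmap 0 (q 2)) := by
    have h : (3 + topNormalDeriv k) * (u (Fmap 0 (q 1)) - u (Fmap 0 (q 2))) = 0 := by
      linear_combination e₁ - e₂
    exact sub_eq_zero.1 ((mul_eq_zero.1 h).resolve_left (by positivity))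
  have hval : u (Fmap 0 (q 1)) = u (q 0) / (1 + topNormalDeriv k) := by
    field_simp
    linear_combination e₁ - hsymm
  exact ⟨hval, hsymm ▸ hval⟩

theorem normalDeriv_eq {m : ℕ} (hu : IsBottomDirichlet m u) :
    normalDeriv m u 0 = topNormalDeriv m * u (q 0) := by
  induction m generalizing u with
  | zero =>
    have h₁ : u (q 1) = 0 := by simpa [xb_eq, q] using hu.bottom 0 (by norm_num)
    have h₂ : u (q 2) = 0 := by simpa [xb_eq, q] using hu.bottom 1 (by norm_num)
    rw [normalDeriv_zero (b := 1) (c := 2) u (by decide) (by decide) (by decide), h₁, h₂,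
      topNormalDeriv]
    norm_num
  | succ k ih =>
    obtain ⟨h₁, h₂⟩ := hu.junction_values_of (ih (hu.comp_Fmap (b := 1) (by decide)))
      (ih (hu.comp_Fmap (b := 2) (by decide)))
    rw [normalDeriv_succ, hu.harmonicOffCorners_comp_Fmap_zero.normalDeriv_eq (b := 1) (c := 2)
      (by decide) (by decide) (by decide)]
    simp only [Function.comp_apply, Fmap_q_self, h₁, h₂, topNormalDeriv_succ]
    have hρ := topNormalDeriv_pos k
    field_simp
    ring

lemma junction_values (hu : IsBottomDirichlet (k + 1) u) :
    u (Fmap 0 (q 1)) = u (q 0) / (1 + topNormalDeriv k) ∧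
      u (Fmap 0 (q 2)) = u (q 0) / (1 + topNormalDeriv k) :=
  hu.junction_values_of (hu.comp_Fmap (b := 1) (by decide)).normalDeriv_eq
    (hu.comp_Fmap (b := 2) (by decide)).normalDeriv_eq

end IsBottomDirichlet

/-- For `m ≥ 1`, let `Φ_m` vanish on the bottom row, equal `1` at `q₀`,
and be graph-harmonic at every other vertex of `V_m`. Then the level-`m` graph normal
derivative at `q₀` equals `14·10^m/(3^m + 6·10^m)`, and the value at the two neighbors
`(q₀+q₁)/2`, `(q₀+q₂)/2` of `q₀` equals `(5·3^m + 9·10^m)/(5·3^m + 30·10^m)`. -/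
theorem stmt18 (m : ℕ) (hm : 1 ≤ m) (Φ : ℝ × ℝ → ℝ)
    (hbot : ∀ j ≤ 2 ^ m, Φ (xb m j) = 0)
    (htop : Φ (q 0) = 1)
    (hharm : ∀ z ∈ V m, (¬ ∃ j ≤ 2 ^ m, z = xb m j) → z ≠ q 0 →
      Φ z = nbrSum m Φ z / (Nat.card {y : ℝ × ℝ // Nbr m z y} : ℝ)) :
    (5 / 3 : ℝ) ^ m * (2 * Φ (q 0) - nbrSum m Φ (q 0)) =
      14 * 10 ^ m / (3 ^ m + 6 * 10 ^ m) ∧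
    Φ ((2⁻¹ : ℝ) • (q 0 + q 1)) = (5 * 3 ^ m + 9 * 10 ^ m) / (5 * 3 ^ m + 30 * 10 ^ m) ∧
    Φ ((2⁻¹ : ℝ) • (q 0 + q 2)) = (5 * 3 ^ m + 9 * 10 ^ m) / (5 * 3 ^ m + 30 * 10 ^ m) := by
  obtain ⟨k, rfl⟩ : ∃ k, m = k + 1 := ⟨m - 1, by omega⟩
  have hΦ : IsBottomDirichlet (k + 1) Φ :=
    ⟨hbot, fun z hz h0 hz0 => hharm z hz (fun ⟨j, _, hj⟩ => h0 (hj ▸ bary_zero_xb _ _)) hz0⟩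
  have hmid (b : Fin 3) : (2⁻¹ : ℝ) • (q 0 + q b) = Fmap 0 (q b) := by rw [Fmap, add_comm]
  obtain ⟨h₁, h₂⟩ := hΦ.junction_values
  refine ⟨?_, ?_, ?_⟩
  · simpa [normalDeriv, htop, topNormalDeriv] using hΦ.normalDeriv_eq
  · rw [hmid, h₁, htop, one_div_one_add_topNormalDeriv]
  · rw [hmid, h₂, htop, one_div_one_add_topNormalDeriv]

end SGPaper
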